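/- With 𝒫_ν defined by the recursion 𝒫_0 = 1, 𝒫_{ν+1} = φ 𝒫_ν' + (ψ + (n-ν-1) φ') 𝒫_ν, and u satisfying (φ u)' = ψ u, the Rodrigues-type identity 𝒫_ν(·;n) u_{n-ν} = d^ν/dx^ν [u_n] holds for all 0 ≤ ν ≤ n, where u_k = φ^k u and derivatives are distributional. -/

import Mathlib

/-!
Writing `u_k = φ^k u`, the Leibniz rule together with the Pearson equation `(φ u)' = ψ u`
(equivalently `φ u' = (ψ - φ') u`) gives, for every polynomial `Q`,
`(Q u_{m+1})' = (φ Q' + (ψ + m φ') Q) u_m`.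
Applying this with `Q = 𝒫_ν` and `m = n - ν - 1` turns `(𝒫_ν u_{n-ν})'` into `𝒫_{ν+1} u_{n-ν-1}`,
so the identity follows by induction on `ν`.
-/

open Polynomial

/-- Distributional derivative of a linear functional: `⟨u', p⟩ = -⟨u, p'⟩`. -/
noncomputable def fD (u : Polynomial ℝ →ₗ[ℝ] ℝ) : Polynomial ℝ →ₗ[ℝ] ℝ :=
  -(u ∘ₗ (derivative : Polynomial ℝ →ₗ[ℝ] Polynomial ℝ))

/-- Multiplication of a functional by a polynomial: `⟨Q u, p⟩ = ⟨u, Q p⟩`. -/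
noncomputable def pmul (Q : Polynomial ℝ) (u : Polynomial ℝ →ₗ[ℝ] ℝ) :
    Polynomial ℝ →ₗ[ℝ] ℝ :=
  u ∘ₗ (LinearMap.mulLeft ℝ Q)


/-- The complementary polynomials: `𝒫₀ = 1`,
`𝒫_{ν+1} = φ 𝒫_ν' + (ψ + (n-ν-1) φ') 𝒫_ν`. -/
noncomputable def compP (φ ψ : Polynomial ℝ) (n : ℕ) : ℕ → Polynomial ℝ
  | 0 => 1
  | ν + 1 => φ * derivative (compP φ ψ n ν)
      + (ψ + C ((n : ℝ) - ν - 1) * derivative φ) * compP φ ψ n ν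

lemma pmul_one (u : Polynomial ℝ →ₗ[ℝ] ℝ) : pmul 1 u = u := by
  refine LinearMap.ext fun p => ?_
  simp [pmul]

lemma pmul_pmul (A B : Polynomial ℝ) (u : Polynomial ℝ →ₗ[ℝ] ℝ) :
    pmul A (pmul B u) = pmul (A * B) u := by
  refine LinearMap.ext fun p => ?_
  simp only [pmul, LinearMap.coe_comp, Function.comp_apply, LinearMap.mulLeft_apply]
  rw [mul_left_comm, mul_assoc]

lemma pmul_add (A B : Polynomial ℝ) (u : Polynomial ℝ →ₗ[ℝ] ℝ) :
    pmul (A + B) u = pmul A u + pmul B u := by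
  refine LinearMap.ext fun p => ?_
  simp [pmul, add_mul]

lemma pmul_sub (A B : Polynomial ℝ) (u : Polynomial ℝ →ₗ[ℝ] ℝ) :
    pmul (A - B) u = pmul A u - pmul B u := by
  refine LinearMap.ext fun p => ?_
  simp [pmul, sub_mul]

lemma fD_pmul (Q : Polynomial ℝ) (u : Polynomial ℝ →ₗ[ℝ] ℝ) :
    fD (pmul Q u) = pmul (derivative Q) u + pmul Q (fD u) := by
  refine LinearMap.ext fun p => ?_
  simp [fD, pmul, derivative_mul]

section Pearson

variable {φ ψ : Polynomial ℝ} {u : Polynomial ℝ →ₗ[ℝ] ℝ}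

lemma pmul_fD_of_pearson (hPearson : fD (pmul φ u) = pmul ψ u) :
    pmul φ (fD u) = pmul (ψ - derivative φ) u := by
  rw [pmul_sub, ← hPearson, fD_pmul, add_sub_cancel_left]

lemma fD_pmul_mul_pow_succ_of_pearson (hPearson : fD (pmul φ u) = pmul ψ u)
    (Q : Polynomial ℝ) (m : ℕ) :
    fD (pmul (Q * φ ^ (m + 1)) u)
      = pmul ((φ * derivative Q + (ψ + C (m : ℝ) * derivative φ) * Q) * φ ^ m) u := by
  rw [fD_pmul, pow_succ, ← mul_assoc, ← pmul_pmul _ φ, pmul_fD_of_pearson hPearson,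
    pmul_pmul, ← pmul_add]
  congr 1
  rw [mul_assoc, ← pow_succ, derivative_mul, derivative_pow_succ, C_add, C_1]
  ring

end Pearson

theorem stmt_6_general (φ ψ : Polynomial ℝ)
    (u : Polynomial ℝ →ₗ[ℝ] ℝ)
    (hPearson : fD (pmul φ u) = pmul ψ u)
    (n ν : ℕ) (hν : ν ≤ n) :
    pmul (compP φ ψ n ν) (pmul (φ ^ (n - ν)) u) = fD^[ν] (pmul (φ ^ n) u) := by
  induction ν with
  | zero => simp [compP, pmul_one]
  | succ ν ih =>
    have hm : n - ν = n - (ν + 1) + 1 := by omega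
    have hc : (n : ℝ) - ν - 1 = ((n - (ν + 1) : ℕ) : ℝ) := by
      rw [Nat.cast_sub hν]
      push_cast
      ring
    rw [Function.iterate_succ_apply', ← ih (by omega), pmul_pmul (compP φ ψ n ν), hm,
      fD_pmul_mul_pow_succ_of_pearson hPearson, ← pmul_pmul, compP, hc]

/-- the Rodrigues-type identity `𝒫_ν(·;n) u_{n-ν} = dⁿᵘ/dxᵛ [u_n]`,
i.e. `𝒫_ν u_{n-ν} = (d/dx)^ν [u_n]` for `0 ≤ ν ≤ n`, where `u_k = φ^k u`. -/
theorem stmt_6 (φ ψ : Polynomial ℝ) (hφ : φ.natDegree ≤ 2) (hψ : ψ.degree = 1)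
    (u : Polynomial ℝ →ₗ[ℝ] ℝ)
    (hPearson : fD (pmul φ u) = pmul ψ u)
    (n ν : ℕ) (hν : ν ≤ n) :
    pmul (compP φ ψ n ν) (pmul (φ ^ (n - ν)) u) = fD^[ν] (pmul (φ ^ n) u) :=
  stmt_6_general φ ψ u hPearson n ν hν
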